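/- Let Σ be an alphabet and let R and C be positive regular expressions over Σ such that (R,C) is plural. The map ρ, sending an m×n Σ-crossword X (with m, n ≥ 2) to the (m+1)×(n+1) Σ'-crossword obtained from X by prepending a new leftmost column consisting of m copies of ♥ and then appending a new bottom row consisting of ♦ followed by n copies of ♠, is injective, and whenever X is an (R,C)-crossword, ρ(X) is an (E,E)-crossword. -/

import Mathlib

/-!
Deleting the marker column and row of `ρ X` gives back `X`, so `ρ` is injective. Every line of
`ρ X` has one of four shapes: `♥` followed by a row of `X` (in `♥R`), `♦♠ⁿ`, a column of `X`
followed by `♠` (in `C♠`), or `♥ᵐ♦`. Plurality gives `m, n ≥ 2`, which is exactly what puts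
`♦♠ⁿ` in `♦♠♠♠*` and `♥ᵐ♦` in `♥♥♥*♦`.
-/

namespace RegexCrossword

/-- `X` is an `(R,C)`-crossword: every row of `X` (read left to right) matches `R`
and every column (read top to bottom) matches `C`. -/
def IsCrossword {σ : Type} {m n : ℕ} (R C : RegularExpression σ)
    (X : Matrix (Fin m) (Fin n) σ) : Prop :=
  (∀ i : Fin m, (List.ofFn fun j => X i j) ∈ R.matches') ∧
  (∀ j : Fin n, (List.ofFn fun i => X i j) ∈ C.matches')

/-- An `(R,C)`-crossword (a nonempty matrix) exists. -/
def CrosswordExists {σ : Type} (R C : RegularExpression σ) : Prop :=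
  ∃ (m n : ℕ), 0 < m ∧ 0 < n ∧ ∃ X : Matrix (Fin m) (Fin n) σ, IsCrossword R C X

/-- A regular expression is positive iff the empty word does not match it. -/
def PositiveRE {σ : Type} (R : RegularExpression σ) : Prop :=
  [] ∉ R.matches'

/-- `(R,C)` is plural: both are positive and every `(R,C)`-crossword has at
least two rows and at least two columns. -/
def Plural {σ : Type} (R C : RegularExpression σ) : Prop :=
  PositiveRE R ∧ PositiveRE C ∧
    ∀ (m n : ℕ) (X : Matrix (Fin m) (Fin n) σ),
      0 < m → 0 < n → IsCrossword R C X → 2 ≤ m ∧ 2 ≤ n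

/-- The spade symbol `♠` (bottom edge marker) in the extended alphabet `σ ⊕ Fin 3`. -/
def spade {σ : Type} : σ ⊕ Fin 3 := Sum.inr 0

/-- The heart symbol `♥` (left edge marker) in the extended alphabet `σ ⊕ Fin 3`. -/
def heart {σ : Type} : σ ⊕ Fin 3 := Sum.inr 1

/-- The diamond symbol `♦` (corner marker) in the extended alphabet `σ ⊕ Fin 3`. -/
def diamond {σ : Type} : σ ⊕ Fin 3 := Sum.inr 2

open RegularExpression in
/-- `R' := ♥R ∪ ♦♠♠♠*`. -/
def Rext {σ : Type} (R : RegularExpression σ) : RegularExpression (σ ⊕ Fin 3) :=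
  char heart * R.map Sum.inl +
    char diamond * char spade * char spade * (char spade).star

open RegularExpression in
/-- `C' := C♠ ∪ ♥♥♥*♦`. -/
def Cext {σ : Type} (C : RegularExpression σ) : RegularExpression (σ ⊕ Fin 3) :=
  C.map Sum.inl * char spade +
    char heart * char heart * (char heart).star * char diamond

/-- `E := R' ∪ C'`. -/
def Eexp {σ : Type} (R C : RegularExpression σ) : RegularExpression (σ ⊕ Fin 3) :=
  Rext R + Cext C

/-- `ρ` prepends a new leftmost column of `♥`'s to `X` and then appends a new
bottom row consisting of `♦` followed by `♠`'s. -/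
def rho {σ : Type} {m n : ℕ} (X : Matrix (Fin m) (Fin n) σ) :
    Matrix (Fin (m + 1)) (Fin (n + 1)) (σ ⊕ Fin 3) := fun i j =>
  if hi : (i : ℕ) < m then
    if hj : (j : ℕ) = 0 then heart
    else Sum.inl (X ⟨i, hi⟩ ⟨(j : ℕ) - 1, by have := j.isLt; omega⟩)
  else if (j : ℕ) = 0 then diamond else spade

end RegexCrossword

namespace RegularExpression

variable {α β : Type*}

theorem mem_matches'_char_self (a : α) : [a] ∈ (char a).matches' := rfl

theorem replicate_mem_matches'_star_char (k : ℕ) (a : α) :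
    List.replicate k a ∈ (char a).star.matches' := by
  rw [matches'_star, Language.mem_kstar]
  exact ⟨List.replicate k [a], by simp, fun y hy => List.eq_of_mem_replicate hy⟩

theorem map_mem_matches'_map (f : α → β) {P : RegularExpression α} {w : List α}
    (h : w ∈ P.matches') : w.map f ∈ (P.map f).matches' := by
  rw [matches'_map]
  exact ⟨w, h, rfl⟩

theorem append_mem_matches'_mul {P Q : RegularExpression α} {u v : List α}
    (hu : u ∈ P.matches') (hv : v ∈ Q.matches') : u ++ v ∈ (P * Q).matches' := by
  rw [matches'_mul]
  exact ⟨u, hu, v, hv, rfl⟩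

end RegularExpression

namespace RegexCrossword

open RegularExpression

section Markers

variable {σ : Type} {R C : RegularExpression σ}

theorem heart_cons_mem_Rext {w : List σ} (hw : w ∈ R.matches') :
    heart :: w.map Sum.inl ∈ (Rext R).matches' :=
  Or.inl (append_mem_matches'_mul (mem_matches'_char_self _) (map_mem_matches'_map _ hw))

theorem diamond_cons_replicate_spade_mem_Rext {n : ℕ} (hn : 2 ≤ n) :
    diamond :: List.replicate n spade ∈ (Rext R).matches' := by
  obtain ⟨k, rfl⟩ := Nat.exists_eq_add_of_le' hn
  exact Or.inr (append_mem_matches'_mul (u := [diamond, spade, spade])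
    (append_mem_matches'_mul (append_mem_matches'_mul (mem_matches'_char_self _)
      (mem_matches'_char_self _)) (mem_matches'_char_self _))
    (replicate_mem_matches'_star_char k spade))

theorem map_append_spade_mem_Cext {w : List σ} (hw : w ∈ C.matches') :
    w.map Sum.inl ++ [spade] ∈ (Cext C).matches' :=
  Or.inl (append_mem_matches'_mul (map_mem_matches'_map _ hw) (mem_matches'_char_self _))

theorem replicate_heart_append_diamond_mem_Cext {m : ℕ} (hm : 2 ≤ m) :
    List.replicate m heart ++ [diamond] ∈ (Cext C).matches' := by
  obtain ⟨k, rfl⟩ := Nat.exists_eq_add_of_le' hm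
  exact Or.inr (append_mem_matches'_mul (u := [heart, heart] ++ List.replicate k heart)
    (append_mem_matches'_mul (append_mem_matches'_mul (mem_matches'_char_self _)
      (mem_matches'_char_self _)) (replicate_mem_matches'_star_char k heart))
    (mem_matches'_char_self _))

theorem mem_Eexp {w : List (σ ⊕ Fin 3)} :
    w ∈ (Eexp R C).matches' ↔ w ∈ (Rext R).matches' ∨ w ∈ (Cext C).matches' :=
  Iff.rfl

end Markers

section Rho

variable {σ : Type} {m n : ℕ} (X : Matrix (Fin m) (Fin n) σ)

@[simp] theorem rho_castSucc_zero (i : Fin m) : rho X i.castSucc 0 = heart := by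
  simp [rho]

@[simp] theorem rho_castSucc_succ (i : Fin m) (j : Fin n) :
    rho X i.castSucc j.succ = Sum.inl (X i j) := by
  simp [rho]

@[simp] theorem rho_last_zero : rho X (Fin.last m) 0 = diamond := by
  simp [rho]

@[simp] theorem rho_last_succ (j : Fin n) : rho X (Fin.last m) j.succ = spade := by
  simp [rho]

theorem rho_injective : Function.Injective (rho : Matrix (Fin m) (Fin n) σ → _) :=
  fun X Y h => Matrix.ext fun i j => Sum.inl_injective (β := Fin 3) <| by
    simpa using congrFun₂ h i.castSucc j.succ

variable {X}

theorem isCrossword_rho {R C : RegularExpression σ} (hm : 2 ≤ m) (hn : 2 ≤ n)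
    (hX : IsCrossword R C X) : IsCrossword (Eexp R C) (Eexp R C) (rho X) := by
  constructor
  · intro i
    rw [mem_Eexp, List.ofFn_succ]
    induction i using Fin.lastCases with
    | last => simpa using Or.inl (diamond_cons_replicate_spade_mem_Rext hn)
    | cast i =>
      simpa [List.map_ofFn, Function.comp_def] using Or.inl (heart_cons_mem_Rext (hX.1 i))
  · intro j
    rw [mem_Eexp, List.ofFn_succ', List.concat_eq_append]
    induction j using Fin.cases with
    | zero => simpa using Or.inr (replicate_heart_append_diamond_mem_Cext hm)
    | succ j =>
      simpa [List.map_ofFn, Function.comp_def] using Or.inr (map_append_spade_mem_Cext (hX.2 j))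

end Rho

/-- **Statement 4.** Let `R` and `C` be positive regular expressions over `σ`
with `(R, C)` plural.  The map `ρ` (on `m × n` crosswords with `m, n ≥ 2`) is
injective, and it takes every `(R,C)`-crossword to an `(E,E)`-crossword. -/
theorem rho_injective_and_maps_crosswords {σ : Type}
    (R C : RegularExpression σ) (hplural : Plural R C) :
    (∀ m n : ℕ, 2 ≤ m → 2 ≤ n →
      Function.Injective fun X : Matrix (Fin m) (Fin n) σ => rho X) ∧
    (∀ (m n : ℕ) (X : Matrix (Fin m) (Fin n) σ), 0 < m → 0 < n →
      IsCrossword R C X → IsCrossword (Eexp R C) (Eexp R C) (rho X)) := by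
  refine ⟨fun m n _ _ => rho_injective, fun m n X hm hn hX => ?_⟩
  obtain ⟨hm2, hn2⟩ := hplural.2.2 m n X hm hn hX
  exact isCrossword_rho hm2 hn2 hX

end RegexCrossword
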